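/- Let B be an essentially small additive category. An object M of the idempotent completion Kar(B) belongs to the weak idempotent completion wkar(B) if and only if the class [M] in the split Grothendieck group K₀^add(Kar(B)) lies in the image of the natural homomorphism K₀^add(B) → K₀^add(Kar(B)). -/

import Mathlib

/-!
Equality of classes in `K₀^add` means stable isomorphism: mapping `K₀^add(A)` to the Grothendieck
group of the monoid of isomorphism classes under `⊞`, `[X] = [Y]` gives `C ⊞ X ≅ C ⊞ Y` for some
`C`. So if `[M] = [P] - [Q]` with `P`, `Q` in `B`, then `C ⊞ Q ⊞ M ≅ C ⊞ P` for some `C` in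
`Kar(B)`; adding a complement `D` of `C`, for which `C ⊞ D` lies in `B`, exhibits `M` in `wkar(B)`.
Conversely `X ⊞ M ≅ Y` gives `[M] = [Y] - [X]`.
-/

open CategoryTheory CategoryTheory.Limits CategoryTheory.Idempotents ZeroObject

universe v u v' u'

/-- The relations subgroup for the split Grothendieck group: generated by
`[X] - [Y] - [Z]` for each direct sum decomposition `X ≅ Y ⊞ Z`. -/
def K0Relations (A : Type u) [Category.{v} A] [Preadditive A] [HasBinaryBiproducts A] :
    AddSubgroup (FreeAbelianGroup A) :=
  AddSubgroup.closure
    {x | ∃ (X Y Z : A), Nonempty (X ≅ Y ⊞ Z) ∧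
      x = FreeAbelianGroup.of X - FreeAbelianGroup.of Y - FreeAbelianGroup.of Z}

/-- The split Grothendieck group `K₀^add(A)`: generated by objects of `A`, with
relations `[X] = [Y] + [Z]` whenever `X ≅ Y ⊞ Z`. -/
def K0add (A : Type u) [Category.{v} A] [Preadditive A] [HasBinaryBiproducts A] :=
  FreeAbelianGroup A ⧸ K0Relations A

noncomputable instance (A : Type u) [Category.{v} A] [Preadditive A]
    [HasBinaryBiproducts A] : AddCommGroup (K0add A) :=
  QuotientAddGroup.Quotient.addCommGroup _

/-- The class `[X] ∈ K₀^add(A)` of an object `X`. -/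
def K0class (A : Type u) [Category.{v} A] [Preadditive A] [HasBinaryBiproducts A]
    (X : A) : K0add A :=
  QuotientAddGroup.mk (FreeAbelianGroup.of X)

/-- The homomorphism `K₀^add(A) → K₀^add(A')` induced by an additive functor. -/
noncomputable def K0map {A : Type u} [Category.{v} A] [Preadditive A] [HasBinaryBiproducts A]
    {A' : Type u'} [Category.{v'} A'] [Preadditive A'] [HasBinaryBiproducts A']
    (F : A ⥤ A') [F.Additive] : K0add A →+ K0add A' :=
  QuotientAddGroup.lift _
    ((QuotientAddGroup.mk' (K0Relations A')).comp (FreeAbelianGroup.map F.obj))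
    (by
      rw [K0Relations, AddSubgroup.closure_le]
      rintro x hx
      obtain ⟨X, Y, Z, ⟨e⟩, rfl⟩ := hx
      have hmap : (FreeAbelianGroup.map F.obj)
          (FreeAbelianGroup.of X - FreeAbelianGroup.of Y - FreeAbelianGroup.of Z)
          = FreeAbelianGroup.of (F.obj X) - FreeAbelianGroup.of (F.obj Y)
            - FreeAbelianGroup.of (F.obj Z) := by
        simp [FreeAbelianGroup.map_of_apply]
      apply AddMonoidHom.mem_ker.mpr
      show (QuotientAddGroup.mk' (K0Relations A'))
        ((FreeAbelianGroup.map F.obj)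
          (FreeAbelianGroup.of X - FreeAbelianGroup.of Y - FreeAbelianGroup.of Z)) = 0
      rw [hmap, QuotientAddGroup.mk'_apply, QuotientAddGroup.eq_zero_iff]
      refine AddSubgroup.subset_closure ?_
      haveI := Limits.preservesBinaryBiproduct_of_preservesBiproduct F Y Z
      exact ⟨F.obj X, F.obj Y, F.obj Z, ⟨F.mapIso e ≪≫ F.mapBiprod Y Z⟩, rfl⟩)

variable (B : Type u) [Category.{v} B] [Preadditive B] [HasZeroObject B]
  [HasFiniteBiproducts B] [EssentiallySmall.{v} B]

noncomputable instance : HasBinaryBiproducts B :=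
  hasBinaryBiproducts_of_finite_biproducts _

noncomputable instance : HasBinaryBiproducts (Karoubi B) :=
  hasBinaryBiproducts_of_finite_biproducts _

/-- Objects of the weak idempotent completion `wkar(B)` inside `Kar(B)`:
those `Z` with `X ⊞ Z ≅ Y` for some `X`, `Y` coming from `B`. -/
def wkarPred (Z : Karoubi B) : Prop :=
  ∃ X Y : B, Nonempty ((toKaroubi B).obj X ⊞ Z ≅ (toKaroubi B).obj Y)

abbrev IsoClass (A : Type u) [Category.{v} A] := Quotient (isIsomorphicSetoid A)

namespace IsoClass

variable {A : Type u} [Category.{v} A]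

def mk (X : A) : IsoClass A := Quotient.mk _ X

lemma mk_surjective : Function.Surjective (mk : A → IsoClass A) :=
  Quotient.mk_surjective

lemma mk_eq_mk_iff {X Y : A} : mk X = mk Y ↔ Nonempty (X ≅ Y) :=
  Quotient.eq

variable [Preadditive A] [HasBinaryBiproducts A]

noncomputable instance : Add (IsoClass A) :=
  ⟨Quotient.map₂ (· ⊞ ·) fun _ _ ⟨e⟩ _ _ ⟨f⟩ => ⟨biprod.mapIso e f⟩⟩

lemma mk_biprod (X Y : A) : mk (X ⊞ Y) = mk X + mk Y := rfl

lemma mk_map_biprod {A' : Type u'} [Category.{v'} A'] [Preadditive A'] [HasBinaryBiproducts A']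
    (F : A ⥤ A') [F.Additive] (X Y : A) :
    mk (F.obj (X ⊞ Y)) = mk (F.obj X) + mk (F.obj Y) := by
  have := preservesBinaryBiproduct_of_preservesBiproduct F X Y
  exact mk_eq_mk_iff.2 ⟨F.mapBiprod X Y⟩

variable [HasZeroObject A]

noncomputable instance : Zero (IsoClass A) := ⟨mk 0⟩

noncomputable instance : AddCommMonoid (IsoClass A) where
  add_assoc a b c := Quotient.inductionOn₃ a b c fun X Y Z =>
    Quotient.sound ⟨biprod.associator X Y Z⟩
  zero_add a := Quotient.inductionOn a fun _ =>
    Quotient.sound ⟨(isoZeroBiprod (isZero_zero A)).symm⟩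
  add_zero a := Quotient.inductionOn a fun _ =>
    Quotient.sound ⟨(isoBiprodZero (isZero_zero A)).symm⟩
  add_comm a b := Quotient.inductionOn₂ a b fun X Y => Quotient.sound ⟨biprod.braiding X Y⟩
  nsmul := nsmulRec
  nsmul_zero _ := rfl
  nsmul_succ _ _ := rfl

end IsoClass

section K0

variable {A : Type u} [Category.{v} A] [Preadditive A] [HasBinaryBiproducts A]

lemma K0class_eq_add_of_iso {X Y Z : A} (e : X ≅ Y ⊞ Z) :
    K0class A X = K0class A Y + K0class A Z := by
  rw [← sub_eq_zero, ← sub_sub]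
  exact (QuotientAddGroup.eq_zero_iff _).2 (AddSubgroup.subset_closure ⟨X, Y, Z, ⟨e⟩, rfl⟩)

lemma K0class_biprod (X Y : A) : K0class A (X ⊞ Y) = K0class A X + K0class A Y :=
  K0class_eq_add_of_iso (Iso.refl _)

lemma K0map_K0class {A' : Type u'} [Category.{v'} A'] [Preadditive A'] [HasBinaryBiproducts A']
    (F : A ⥤ A') [F.Additive] (X : A) : K0map F (K0class A X) = K0class A' (F.obj X) :=
  rfl

variable [HasZeroObject A]

lemma K0class_zero : K0class A 0 = 0 := by
  simpa using K0class_eq_add_of_iso (isoZeroBiprod (isZero_zero A) (Y := (0 : A)))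

lemma K0add.exists_eq_K0class_sub (z : K0add A) : ∃ P Q : A, z = K0class A P - K0class A Q := by
  obtain ⟨w, rfl⟩ := QuotientAddGroup.mk_surjective z
  induction w using FreeAbelianGroup.induction_on with
  | zero => exact ⟨0, 0, (sub_self _).symm⟩
  | of X => exact ⟨X, 0, by rw [K0class_zero, sub_zero]; rfl⟩
  | neg X _ => exact ⟨0, X, by rw [K0class_zero, zero_sub]; rfl⟩
  | add x y hx hy =>
    obtain ⟨P, Q, hPQ⟩ := hx
    obtain ⟨P', Q', hPQ'⟩ := hy
    refine ⟨P ⊞ P', Q ⊞ Q', ?_⟩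
    rw [QuotientAddGroup.mk_add, hPQ, hPQ', K0class_biprod, K0class_biprod]
    abel

noncomputable def K0add.toGrothendieckAddGroup :
    K0add A →+ Algebra.GrothendieckAddGroup (IsoClass A) :=
  QuotientAddGroup.lift _
    (FreeAbelianGroup.lift fun X => Algebra.GrothendieckAddGroup.of (IsoClass.mk X)) <| by
    rw [K0Relations, AddSubgroup.closure_le]
    rintro _ ⟨X, Y, Z, ⟨e⟩, rfl⟩
    simp [IsoClass.mk_eq_mk_iff.2 ⟨e⟩, IsoClass.mk_biprod]

lemma K0add.toGrothendieckAddGroup_K0class (X : A) :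
    K0add.toGrothendieckAddGroup (K0class A X) = Algebra.GrothendieckAddGroup.of (IsoClass.mk X) :=
  FreeAbelianGroup.lift_apply_of _ _

lemma exists_add_eq_of_K0class_eq {X Y : A} (h : K0class A X = K0class A Y) :
    ∃ c : IsoClass A, c + IsoClass.mk X = c + IsoClass.mk Y := by
  have h' := congrArg K0add.toGrothendieckAddGroup h
  rw [K0add.toGrothendieckAddGroup_K0class, K0add.toGrothendieckAddGroup_K0class] at h'
  obtain ⟨⟨c, _⟩, hc⟩ := (AddLocalization.addMonoidOf ⊤).eq_iff_exists.1 h'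
  exact ⟨c, hc⟩

end K0

section Karoubi

variable {C : Type u} [Category.{v} C] [Preadditive C] [HasFiniteBiproducts C]

lemma IsoClass.exists_add_eq_mk_toKaroubi (c : IsoClass (Karoubi C)) :
    ∃ (X : C) (d : IsoClass (Karoubi C)), c + d = IsoClass.mk ((toKaroubi C).obj X) := by
  obtain ⟨P, rfl⟩ := IsoClass.mk_surjective c
  exact ⟨P.X, IsoClass.mk P.complement, IsoClass.mk_eq_mk_iff.2 ⟨P.decomposition⟩⟩

lemma wkarPred_of_add_mk_eq {c : IsoClass (Karoubi C)} {P Q : C} {M : Karoubi C}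
    (h : c + IsoClass.mk ((toKaroubi C).obj Q ⊞ M) = c + IsoClass.mk ((toKaroubi C).obj P)) :
    wkarPred C M := by
  obtain ⟨X, d, hX⟩ := IsoClass.exists_add_eq_mk_toKaroubi c
  refine ⟨X ⊞ Q, X ⊞ P, IsoClass.mk_eq_mk_iff.1 ?_⟩
  rw [IsoClass.mk_biprod] at h
  rw [IsoClass.mk_biprod, IsoClass.mk_map_biprod, IsoClass.mk_map_biprod, ← hX]
  calc c + d + IsoClass.mk ((toKaroubi C).obj Q) + IsoClass.mk M
      = d + (c + (IsoClass.mk ((toKaroubi C).obj Q) + IsoClass.mk M)) := by abel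
    _ = d + (c + IsoClass.mk ((toKaroubi C).obj P)) := by rw [h]
    _ = c + d + IsoClass.mk ((toKaroubi C).obj P) := by abel

end Karoubi

/-- for an essentially small additive category `B`, an object `M` of
`Kar(B)` lies in the weak idempotent completion `wkar(B)` iff its class in the split
Grothendieck group `K₀^add(Kar(B))` lies in the image of `K₀^add(B) → K₀^add(Kar(B))`. -/
theorem mem_wkar_iff_K0class_mem_range (M : Karoubi B) :
    wkarPred B M ↔
      K0class (Karoubi B) M ∈ (K0map (toKaroubi B)).range := by
  constructor
  · rintro ⟨X, Y, ⟨e⟩⟩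
    refine ⟨K0class B Y - K0class B X, ?_⟩
    rw [map_sub, K0map_K0class, K0map_K0class, K0class_eq_add_of_iso e.symm]
    abel
  · rintro ⟨z, hz⟩
    obtain ⟨P, Q, rfl⟩ := K0add.exists_eq_K0class_sub z
    rw [map_sub, K0map_K0class, K0map_K0class] at hz
    have hQM : K0class (Karoubi B) ((toKaroubi B).obj Q ⊞ M) =
        K0class (Karoubi B) ((toKaroubi B).obj P) := by
      rw [K0class_biprod, ← hz]
      abel
    obtain ⟨c, hc⟩ := exists_add_eq_of_K0class_eq hQM
    exact wkarPred_of_add_mk_eq hc
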